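/- (Kato type smoothing effect.) Let j ≥ 1 be an integer. There is a constant C such that for every u_0 ∈ L²(ℝ) (say Schwartz), ‖∂_x^j U_j(t) u_0‖_{L^∞_x L²_t} ≤ C ‖u_0‖_{L²}, where the inner L² norm in t is taken over all of ℝ and the outer norm is the essential supremum in x. -/

import Mathlib

open MeasureTheory
open scoped ENNReal

noncomputable section

/-- The Fourier multiplier operator with symbol `m`: `f ↦ (m · f̂)^∨`. -/
def fourierMul (m : ℝ → ℂ) (f : ℝ → ℂ) : ℝ → ℂ :=
  (FourierTransformInv.fourierInv (fun ξ => m ξ * (FourierTransform.fourier f : ℝ → ℂ) ξ) : ℝ → ℂ)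

/-- The unitary group `U_j(t) = e^{-t ∂_x^{2j+1}}`, given on the Fourier side by
multiplication with `exp((-1)^{j+1} i ξ^{2j+1} t)`. -/
def Uj (j : ℕ) (t : ℝ) (f : ℝ → ℂ) : ℝ → ℂ :=
  fourierMul (fun ξ =>
    Complex.exp (Complex.I * (((-1 : ℝ) ^ (j + 1) * ξ ^ (2 * j + 1) * t : ℝ) : ℂ))) f

/-- The Fourier multiplier `D_x^{1/4}` with symbol `|ξ|^{1/4}`. -/
def Dquarter (f : ℝ → ℂ) : ℝ → ℂ :=
  fourierMul (fun ξ => ((|ξ| ^ ((1 : ℝ) / 4) : ℝ) : ℂ)) f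

/-- A Littlewood–Paley cutoff function: `χ ∈ C_0^∞`, `0 ≤ χ ≤ 1`, `χ ≡ 1` on `[-1,1]`,
`supp χ ⊆ [-2,2]`. -/
structure IsLPCutoff (χ : ℝ → ℝ) : Prop where
  smooth : ContDiff ℝ (⊤ : ℕ∞) χ
  compSupp : HasCompactSupport χ
  nonneg : ∀ ξ, 0 ≤ χ ξ
  le_one : ∀ ξ, χ ξ ≤ 1
  one_on : ∀ ξ ∈ Set.Icc (-1 : ℝ) 1, χ ξ = 1
  supp : Function.support χ ⊆ Set.Icc (-2 : ℝ) 2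

/-- `ψ(ξ) = χ(ξ) - χ(2ξ)`. -/
def lpPsi (χ : ℝ → ℝ) (ξ : ℝ) : ℝ := χ ξ - χ (2 * ξ)

/-- The Littlewood–Paley projection `Δ_l f = (ψ(2^{-l}·) f̂)^∨`. -/
def Δop (χ : ℝ → ℝ) (l : ℕ) (f : ℝ → ℂ) : ℝ → ℂ :=
  fourierMul (fun ξ => (lpPsi χ ((2 : ℝ) ^ (-(l : ℤ)) * ξ) : ℂ)) f

/-- The low-frequency projection `S_0 f = (χ f̂)^∨`. -/
def S0op (χ : ℝ → ℝ) (f : ℝ → ℂ) : ℝ → ℂ :=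
  fourierMul (fun ξ => (χ ξ : ℂ)) f

/-- `L^q` norm in the time variable on `[-T, T]`. -/
def timeNorm (q : ℝ≥0∞) (T : ℝ) (g : ℝ → ℂ) : ℝ≥0∞ :=
  eLpNorm g q (volume.restrict (Set.Icc (-T) T))

/-- The mixed norm `‖u‖_{L^p_x L^q_T}`, for `u = u(x,t)`. -/
def mixedNorm (p q : ℝ≥0∞) (T : ℝ) (u : ℝ → ℝ → ℂ) : ℝ≥0∞ :=
  if p = ∞ then essSup (fun x => timeNorm q T (u x)) volume
  else (∫⁻ x, timeNorm q T (u x) ^ p.toReal) ^ (1 / p.toReal)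

/-- The mixed norm `‖u‖_{L^p_x L^q_t}` with the time integration over all of `ℝ`. -/
def mixedNormGlob (p q : ℝ≥0∞) (u : ℝ → ℝ → ℂ) : ℝ≥0∞ :=
  if p = ∞ then essSup (fun x => eLpNorm (u x) q volume) volume
  else (∫⁻ x, eLpNorm (u x) q volume ^ p.toReal) ^ (1 / p.toReal)

/-- The norm `‖u‖_{L^∞_T L²_x} = sup_{t ∈ [-T,T]} ‖u(·,t)‖_{L²}`. -/
def supT_L2x (T : ℝ) (u : ℝ → ℝ → ℂ) : ℝ≥0∞ :=
  ⨆ t ∈ Set.Icc (-T) T, eLpNorm (fun x => u x t) 2 volume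

/-- The Sobolev norm `‖f‖_{H^s} = ‖(1+ξ²)^{s/2} f̂(ξ)‖_{L²}`. -/
def sobolevNorm (s : ℝ) (f : ℝ → ℂ) : ℝ≥0∞ :=
  eLpNorm (fun ξ => (((1 + ξ ^ 2) ^ (s / 2) : ℝ) : ℂ) * (FourierTransform.fourier f : ℝ → ℂ) ξ) 2 volume


section KatoProof
open MeasureTheory Real Complex Filter
open scoped ENNReal FourierTransform

lemma real_innerL (v w : ℝ) : innerₗ ℝ v w = v * w := by
  simp [RCLike.inner_apply, mul_comm]

lemma innerL_flip : (innerₗ ℝ).flip = innerₗ ℝ := by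
  ext v w
  simp [LinearMap.flip_apply, real_innerL, mul_comm]

lemma continuous_innerL : Continuous fun p : ℝ × ℝ => innerₗ ℝ p.1 p.2 := by
  simp only [real_innerL]; exact continuous_mul

/-- Multiplication formula for the Fourier transform. -/
lemma fourier_mult_formula {f g : ℝ → ℂ} (hf : Integrable f volume) (hg : Integrable g volume) :
    ∫ t, 𝓕 f t * g t = ∫ x, f x * 𝓕 g x := by
  have := VectorFourier.integral_fourierIntegral_smul_eq_flip (e := 𝐞) (L := innerₗ ℝ)
    (μ := volume) (ν := volume) Real.continuous_fourierChar continuous_innerL hf hg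
  rw [innerL_flip] at this
  simp only [smul_eq_mul] at this
  exact this

lemma continuous_fourier {f : ℝ → ℂ} (hf : Integrable f volume) : Continuous (𝓕 f) :=
  VectorFourier.fourierIntegral_continuous Real.continuous_fourierChar continuous_innerL hf

lemma norm_fourier_le {f : ℝ → ℂ} (t : ℝ) : ‖𝓕 f t‖ ≤ ∫ x, ‖f x‖ :=
  VectorFourier.norm_fourierIntegral_le_integral_norm _ _ _ _ _



/-- real heat kernel -/
def kR (δ r : ℝ) : ℝ := (Real.sqrt δ)⁻¹ * rexp (-(π / δ) * r ^ 2)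

lemma kR_nonneg {δ : ℝ} (hδ : 0 < δ) (r : ℝ) : 0 ≤ kR δ r := by
  unfold kR; positivity

lemma kR_integral {δ : ℝ} (hδ : 0 < δ) : ∫ r, kR δ r = 1 := by
  unfold kR
  rw [integral_const_mul, integral_gaussian]
  have h : π / (π / δ) = δ := by field_simp
  rw [h]
  exact inv_mul_cancel₀ (by positivity)

lemma kR_lintegral {δ : ℝ} (hδ : 0 < δ) : ∫⁻ r, ENNReal.ofReal (kR δ r) = 1 := by
  rw [← ofReal_integral_eq_lintegral_ofReal]
  · rw [kR_integral hδ]; simp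
  · exact ((integrable_exp_neg_mul_sq (by positivity)).const_mul _)
  · exact Eventually.of_forall (kR_nonneg hδ)

lemma kR_measurable {δ : ℝ} : Measurable (kR δ) := by
  unfold kR; fun_prop

/-- Gaussian modulated Fourier transform. -/
lemma gaussian_modulated_ft {δ : ℝ} (hδ : 0 < δ) (η : ℝ) :
    𝓕 (fun t : ℝ => Complex.exp (2 * (π : ℂ) * (Complex.I * (η : ℂ)) * (t : ℂ)) *
        ((rexp (-(π * δ) * t ^ 2) : ℝ) : ℂ)) =
      fun s : ℝ => ((kR δ (s - η) : ℝ) : ℂ) := by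
  have hb : (0 : ℝ) < ((δ : ℂ)).re := by simpa using hδ
  have := fourier_gaussian_pi' hb ((Complex.I * (η : ℂ)))
  have heq : (fun t : ℝ => Complex.exp (2 * (π : ℂ) * (Complex.I * (η : ℂ)) * (t : ℂ)) *
      ((rexp (-(π * δ) * t ^ 2) : ℝ) : ℂ)) =
      fun x : ℝ => Complex.exp (-(π : ℂ) * (δ : ℂ) * (x : ℂ) ^ 2 +
        2 * (π : ℂ) * (Complex.I * (η : ℂ)) * (x : ℂ)) := by
    funext x
    rw [Complex.exp_add, mul_comm]
    congr 1
    rw [Complex.ofReal_exp]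
    congr 1
    push_cast
    ring
  rw [heq, this]
  funext s
  have h1 : ((s : ℂ) + Complex.I * (Complex.I * (η : ℂ))) = ((s - η : ℝ) : ℂ) := by
    rw [← mul_assoc, Complex.I_mul_I]; push_cast; ring
  rw [h1]
  have h2 : (1 : ℂ) / (δ : ℂ) ^ (1 / 2 : ℂ) = (((Real.sqrt δ)⁻¹ : ℝ) : ℂ) := by
    have hsq : ((δ : ℂ) ^ (1 / 2 : ℂ)) = ((Real.sqrt δ : ℝ) : ℂ) := by
      rw [show ((1 : ℂ)/2) = ((1/2 : ℝ) : ℂ) by norm_num, ← Complex.ofReal_cpow hδ.le,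
        Real.sqrt_eq_rpow]
    rw [one_div, hsq, ← Complex.ofReal_inv]
  have h3 : Complex.exp (-(π : ℂ) / (δ : ℂ) * ((s - η : ℝ) : ℂ) ^ 2) =
      ((rexp (-(π / δ) * (s - η) ^ 2) : ℝ) : ℂ) := by
    rw [Complex.ofReal_exp]
    congr 1
    push_cast
    ring
  rw [h2, h3]
  unfold kR
  push_cast
  ring


open ENNReal in
lemma conv_bound {G : ℝ → ℝ≥0∞} (hG : Measurable G) {k : ℝ → ℝ≥0∞} (hk : Measurable k)
    (hk1 : ∫⁻ r, k r = 1) :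
    ∫⁻ η, G η * ∫⁻ s, G s * k (s - η) ≤ ∫⁻ η, G η ^ (2 : ℝ) := by
  have hconj : Real.HolderConjugate 2 2 := Real.HolderConjugate.two_two
  have m1 : Measurable fun p : ℝ × ℝ => G p.1 := hG.comp measurable_fst
  have m2 : Measurable fun p : ℝ × ℝ => G p.2 := hG.comp measurable_snd
  have mk : Measurable fun p : ℝ × ℝ => k (p.2 - p.1) :=
    hk.comp (measurable_snd.sub measurable_fst)
  have key : ∀ r : ℝ≥0∞, r ^ (1/2 : ℝ) * r ^ (1/2 : ℝ) = r := by
    intro r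
    rw [← ENNReal.rpow_add_of_nonneg (1/2) (1/2) (by norm_num) (by norm_num)]
    norm_num
  have tr1 : ∀ η : ℝ, ∫⁻ s, k (s - η) = 1 := by
    intro η
    simp_rw [sub_eq_add_neg]
    rw [lintegral_add_right_eq_self k (-η)]
    exact hk1
  have tr2 : ∀ s : ℝ, ∫⁻ η, k (s - η) = 1 := by
    intro s
    have hneg : ∫⁻ η, k (s - η) = ∫⁻ η, k (s + η) := by
      have := (Measure.measurePreserving_neg (volume : Measure ℝ)).lintegral_comp
        (f := fun η => k (s + η)) (hk.comp (measurable_const.add measurable_id))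
      simp only [← sub_eq_add_neg] at this
      rw [← this]
    rw [hneg]
    simp_rw [add_comm s]
    rw [lintegral_add_right_eq_self k s]
    exact hk1
  have step1 : ∫⁻ η, G η * ∫⁻ s, G s * k (s - η) =
      ∫⁻ p : ℝ × ℝ, G p.1 * (G p.2 * k (p.2 - p.1)) ∂(volume.prod volume) := by
    rw [lintegral_prod (fun p : ℝ × ℝ => G p.1 * (G p.2 * k (p.2 - p.1))) ((m1.mul (m2.mul mk)).aemeasurable)]
    congr 1
    funext η
    simp only
    rw [← lintegral_const_mul _ (show Measurable fun s : ℝ => G s * k (s - η) by fun_prop)]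
  rw [step1]
  have f1eq : ∫⁻ p : ℝ × ℝ, (G p.1 * k (p.2 - p.1) ^ (1/2 : ℝ)) ^ (2:ℝ) ∂(volume.prod volume)
      = ∫⁻ η, G η ^ (2:ℝ) := by
    have e1 : ∀ (a b : ℝ≥0∞), (a * b ^ (1/2:ℝ)) ^ (2:ℝ) = a ^ (2:ℝ) * b := by
      intro a b
      rw [ENNReal.mul_rpow_of_nonneg _ _ (by norm_num), ← ENNReal.rpow_mul]
      norm_num
    simp_rw [e1]
    rw [lintegral_prod (fun p : ℝ × ℝ => G p.1 ^ (2:ℝ) * k (p.2 - p.1)) ((m1.pow_const _).mul mk).aemeasurable]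
    congr 1
    funext η
    simp only
    rw [lintegral_const_mul _ (show Measurable fun s : ℝ => k (s - η) by fun_prop), tr1 η, mul_one]
  have f2eq : ∫⁻ p : ℝ × ℝ, (G p.2 * k (p.2 - p.1) ^ (1/2 : ℝ)) ^ (2:ℝ) ∂(volume.prod volume)
      = ∫⁻ η, G η ^ (2:ℝ) := by
    have e1 : ∀ (a b : ℝ≥0∞), (a * b ^ (1/2:ℝ)) ^ (2:ℝ) = a ^ (2:ℝ) * b := by
      intro a b
      rw [ENNReal.mul_rpow_of_nonneg _ _ (by norm_num), ← ENNReal.rpow_mul]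
      norm_num
    simp_rw [e1]
    rw [lintegral_prod_symm (fun p : ℝ × ℝ => G p.2 ^ (2:ℝ) * k (p.2 - p.1)) ((m2.pow_const _).mul mk).aemeasurable]
    congr 1
    funext s
    simp only
    rw [lintegral_const_mul _ (show Measurable fun η : ℝ => k (s - η) by fun_prop), tr2 s, mul_one]
  calc ∫⁻ p : ℝ × ℝ, G p.1 * (G p.2 * k (p.2 - p.1)) ∂(volume.prod volume)
      = ∫⁻ p : ℝ × ℝ, ((fun p : ℝ × ℝ => G p.1 * k (p.2 - p.1) ^ (1/2 : ℝ)) *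
          (fun p : ℝ × ℝ => G p.2 * k (p.2 - p.1) ^ (1/2 : ℝ))) p ∂(volume.prod volume) := by
        congr 1
        funext p
        simp only [Pi.mul_apply]
        rw [mul_mul_mul_comm, key]
        ring
    _ ≤ (∫⁻ p : ℝ × ℝ, (G p.1 * k (p.2 - p.1) ^ (1/2 : ℝ)) ^ (2:ℝ) ∂(volume.prod volume)) ^ (1/(2:ℝ)) *
        (∫⁻ p : ℝ × ℝ, (G p.2 * k (p.2 - p.1) ^ (1/2 : ℝ)) ^ (2:ℝ) ∂(volume.prod volume)) ^ (1/(2:ℝ)) :=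
        ENNReal.lintegral_mul_le_Lp_mul_Lq _ hconj
          ((m1.mul (mk.pow_const _)).aemeasurable)
          ((m2.mul (mk.pow_const _)).aemeasurable)
    _ = ∫⁻ η, G η ^ (2:ℝ) := by rw [f1eq, f2eq, key]


set_option maxHeartbeats 1000000 in
lemma key_delta {g : ℝ → ℂ} (hg : Integrable g volume) {δ : ℝ} (hδ : 0 < δ) :
    ∫⁻ t, (‖𝓕 g t‖₊ : ℝ≥0∞) ^ (2:ℝ) * ENNReal.ofReal (rexp (-(π * δ) * t ^ 2)) ≤
      ∫⁻ η, (‖g η‖₊ : ℝ≥0∞) ^ (2:ℝ) := by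
  have hπδ : 0 < π * δ := by positivity
  have hFcont : Continuous (𝓕 g) := continuous_fourier hg
  set M : ℝ := ∫ x, ‖g x‖ with hM
  have hM0 : 0 ≤ M := integral_nonneg fun x => norm_nonneg _
  have hFbd : ∀ t, ‖𝓕 g t‖ ≤ M := fun t => norm_fourier_le t
  -- the weight
  set w : ℝ → ℂ := fun t => (starRingEnd ℂ) (𝓕 g t) * ((rexp (-(π * δ) * t ^ 2) : ℝ) : ℂ)
    with hw_def
  have hw_cont : Continuous w := by
    apply Continuous.mul
    · exact Complex.continuous_conj.comp hFcont
    · continuity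
  have hw : Integrable w volume := by
    apply Integrable.mono' ((integrable_exp_neg_mul_sq hπδ).const_mul M)
      hw_cont.aestronglyMeasurable
    refine Eventually.of_forall fun t => ?_
    rw [hw_def]
    simp only [norm_mul, RCLike.norm_conj, Complex.norm_real, Real.norm_eq_abs, Real.abs_exp]
    exact mul_le_mul_of_nonneg_right (hFbd t) (Real.exp_nonneg _)
  -- the real integrand
  set R : ℝ → ℝ := fun t => ‖𝓕 g t‖ ^ 2 * rexp (-(π * δ) * t ^ 2) with hR_def
  have hR0 : ∀ t, 0 ≤ R t := fun t => by positivity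
  have hRint : Integrable R volume := by
    apply Integrable.mono' ((integrable_exp_neg_mul_sq hπδ).const_mul (M ^ 2))
      ((hFcont.norm.pow 2).mul (by continuity)).aestronglyMeasurable
    refine Eventually.of_forall fun t => ?_
    change ‖R t‖ ≤ _
    rw [Real.norm_eq_abs, _root_.abs_of_nonneg (hR0 t), hR_def]
    apply mul_le_mul_of_nonneg_right _ (Real.exp_nonneg _)
    exact pow_le_pow_left₀ (norm_nonneg _) (hFbd t) 2
  -- LHS equals ofReal of the real integral
  have hLHS : ∫⁻ t, (‖𝓕 g t‖₊ : ℝ≥0∞) ^ (2:ℝ) * ENNReal.ofReal (rexp (-(π * δ) * t ^ 2)) =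
      ENNReal.ofReal (∫ t, R t) := by
    rw [ofReal_integral_eq_lintegral_ofReal hRint (Eventually.of_forall hR0)]
    congr 1
    funext t
    rw [hR_def]
    rw [ENNReal.ofReal_mul (by positivity), ENNReal.ofReal_pow (norm_nonneg _)]
    congr 1
    rw [ofReal_norm_eq_enorm, enorm_eq_nnnorm]
    rw [← ENNReal.rpow_natCast]
    norm_num
  -- the complex chain
  set A : ℂ := ∫ t, 𝓕 g t * w t with hA_def
  have hA1 : ((∫ t, R t : ℝ) : ℂ) = A := by
    have hpt : ∀ t, 𝓕 g t * w t = ((R t : ℝ) : ℂ) := by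
      intro t
      rw [hw_def, hR_def]
      have : 𝓕 g t * ((starRingEnd ℂ) (𝓕 g t) * ((rexp (-(π * δ) * t ^ 2) : ℝ) : ℂ)) =
          (𝓕 g t * (starRingEnd ℂ) (𝓕 g t)) * ((rexp (-(π * δ) * t ^ 2) : ℝ) : ℂ) := by ring
      rw [this, Complex.mul_conj]
      rw [Complex.normSq_eq_norm_sq]
      push_cast
      ring
    rw [hA_def]
    simp_rw [hpt]
    exact (integral_ofReal).symm
  have hA2 : A = ∫ η, g η * 𝓕 w η := fourier_mult_formula hg hw
  -- compute 𝓕 w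
  have hFw : ∀ η : ℝ, 𝓕 w η =
      (starRingEnd ℂ) (∫ s, g s * ((kR δ (s - η) : ℝ) : ℂ)) := by
    intro η
    set v : ℝ → ℂ := fun t => Complex.exp (2 * (π : ℂ) * (Complex.I * (η : ℂ)) * (t : ℂ)) *
      ((rexp (-(π * δ) * t ^ 2) : ℝ) : ℂ) with hv_def
    have hv_cont : Continuous v := by
      apply Continuous.mul
      · apply Complex.continuous_exp.comp; continuity
      · continuity
    have hv : Integrable v volume := by
      apply Integrable.mono' (integrable_exp_neg_mul_sq hπδ) hv_cont.aestronglyMeasurable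
      refine Eventually.of_forall fun t => ?_
      rw [hv_def]
      simp only [norm_mul, Complex.norm_real, Real.norm_eq_abs, Real.abs_exp]
      have : ‖Complex.exp (2 * (π : ℂ) * (Complex.I * (η : ℂ)) * (t : ℂ))‖ = 1 := by
        rw [Complex.norm_exp]
        congr 1
        have : 2 * (π : ℂ) * (Complex.I * (η : ℂ)) * (t : ℂ) = (2 * π * η * t : ℝ) * Complex.I := by
          push_cast; ring
        rw [this]
        simp [Complex.mul_I_re]
      rw [this, one_mul]
    have hE : ∫ t, 𝓕 g t * v t = ∫ s, g s * ((kR δ (s - η) : ℝ) : ℂ) := by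
      rw [fourier_mult_formula hg hv]
      congr 1
      funext s
      rw [hv_def, gaussian_modulated_ft hδ η]
    rw [← hE, ← integral_conj]
    rw [Real.fourier_real_eq_integral_exp_smul]
    congr 1
    funext t
    show Complex.exp (((-2 * π * t * η : ℝ) : ℂ) * Complex.I) •
        ((starRingEnd ℂ) (𝓕 g t) * ((rexp (-(π * δ) * t ^ 2) : ℝ) : ℂ)) =
      (starRingEnd ℂ) (𝓕 g t * (Complex.exp (2 * (π : ℂ) * (Complex.I * (η : ℂ)) * (t : ℂ)) *
        ((rexp (-(π * δ) * t ^ 2) : ℝ) : ℂ)))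
    rw [smul_eq_mul, map_mul, map_mul]
    have hker : (starRingEnd ℂ) (Complex.exp (2 * (π : ℂ) * (Complex.I * (η : ℂ)) * (t : ℂ))) =
        Complex.exp (((-2 * π * t * η : ℝ) : ℂ) * Complex.I) := by
      rw [← Complex.exp_conj]
      congr 1
      simp only [map_mul, Complex.conj_I, Complex.conj_ofReal, map_ofNat]
      push_cast
      ring
    have hgauss : (starRingEnd ℂ) (((rexp (-(π * δ) * t ^ 2) : ℝ) : ℂ)) =
        ((rexp (-(π * δ) * t ^ 2) : ℝ) : ℂ) := Complex.conj_ofReal _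
    rw [hker, hgauss]
    ring
  -- bound
  rw [hLHS]
  have hCle : ∀ η : ℝ, (‖∫ s, g s * ((kR δ (s - η) : ℝ) : ℂ)‖₊ : ℝ≥0∞) ≤
      ∫⁻ s, (‖g s‖₊ : ℝ≥0∞) * ENNReal.ofReal (kR δ (s - η)) := by
    intro η
    refine le_trans (enorm_integral_le_lintegral_enorm _) ?_
    refine lintegral_mono fun s => ?_
    rw [enorm_eq_nnnorm, nnnorm_mul, ENNReal.coe_mul]
    apply mul_le_mul_right
    apply le_of_eq
    rw [← enorm_eq_nnnorm, ← ofReal_norm_eq_enorm, Complex.norm_real, Real.norm_eq_abs,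
      _root_.abs_of_nonneg (kR_nonneg hδ _)]
  have h1 : ENNReal.ofReal (∫ t, R t) ≤ (‖A‖₊ : ℝ≥0∞) := by
    rw [← enorm_eq_nnnorm, ← ofReal_norm_eq_enorm, ← hA1]
    rw [Complex.norm_real, Real.norm_eq_abs]
    exact ENNReal.ofReal_le_ofReal (le_abs_self _)
  refine le_trans h1 ?_
  rw [hA2]
  refine le_trans (enorm_integral_le_lintegral_enorm _) ?_
  have h2 : ∫⁻ η, (‖g η * 𝓕 w η‖₊ : ℝ≥0∞) ≤
      ∫⁻ η, (‖g η‖₊ : ℝ≥0∞) * ∫⁻ s, (‖g s‖₊ : ℝ≥0∞) * ENNReal.ofReal (kR δ (s - η)) := by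
    refine lintegral_mono fun η => ?_
    rw [nnnorm_mul, ENNReal.coe_mul, hFw η, RCLike.nnnorm_conj]
    exact mul_le_mul_right (hCle η) _
  refine le_trans h2 ?_
  -- replace by measurable representative and conclude via conv_bound
  obtain ⟨G0, hG0m, hG0e⟩ := hg.aestronglyMeasurable.aemeasurable.nnnorm.coe_nnreal_ennreal
  have hinner : ∀ η : ℝ, ∫⁻ s, (‖g s‖₊ : ℝ≥0∞) * ENNReal.ofReal (kR δ (s - η)) =
      ∫⁻ s, G0 s * ENNReal.ofReal (kR δ (s - η)) := by
    intro η
    apply lintegral_congr_ae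
    filter_upwards [hG0e] with s hs
    rw [hs]
  have houter : ∫⁻ η, (‖g η‖₊ : ℝ≥0∞) * ∫⁻ s, (‖g s‖₊ : ℝ≥0∞) * ENNReal.ofReal (kR δ (s - η)) =
      ∫⁻ η, G0 η * ∫⁻ s, G0 s * ENNReal.ofReal (kR δ (s - η)) := by
    apply lintegral_congr_ae
    filter_upwards [hG0e] with η hη
    rw [hη, hinner η]
  rw [houter]
  have hfinal : ∫⁻ η, (‖g η‖₊ : ℝ≥0∞) ^ (2:ℝ) = ∫⁻ η, G0 η ^ (2:ℝ) := by
    apply lintegral_congr_ae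
    filter_upwards [hG0e] with η hη
    rw [hη]
  rw [hfinal]
  exact conv_bound hG0m (ENNReal.measurable_ofReal.comp kR_measurable) (kR_lintegral hδ)



theorem plancherel_ineq {g : ℝ → ℂ} (hg : Integrable g volume) :
    eLpNorm (𝓕 g) 2 volume ≤ eLpNorm g 2 volume := by
  rw [eLpNorm_eq_lintegral_rpow_enorm_toReal (by norm_num) (by norm_num),
    eLpNorm_eq_lintegral_rpow_enorm_toReal (by norm_num) (by norm_num)]
  simp only [ENNReal.toReal_ofNat, enorm_eq_nnnorm]
  apply ENNReal.rpow_le_rpow _ (by norm_num)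
  -- reduce to the sup over Gaussian-damped integrals
  set F : ℕ → ℝ → ℝ≥0∞ := fun n t =>
    (‖𝓕 g t‖₊ : ℝ≥0∞) ^ (2:ℝ) * ENNReal.ofReal (rexp (-(π * (1/((n:ℝ)+1))) * t ^ 2)) with hF
  have hFcont : Continuous (𝓕 g) := continuous_fourier hg
  have hmeas : ∀ n, Measurable (F n) := by
    intro n
    apply Measurable.mul
    · exact (hFcont.measurable.nnnorm.coe_nnreal_ennreal).pow_const _
    · exact ENNReal.measurable_ofReal.comp (by fun_prop)
  have hmono : Monotone F := by
    intro n m hnm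
    intro t
    apply mul_le_mul_right
    apply ENNReal.ofReal_le_ofReal
    apply Real.exp_le_exp.mpr
    have hx : (1:ℝ)/((m:ℝ)+1) ≤ 1/((n:ℝ)+1) := by
      apply one_div_le_one_div_of_le (by positivity)
      have : (n:ℝ) ≤ (m:ℝ) := Nat.cast_le.mpr hnm
      linarith
    have h5 := mul_le_mul_of_nonneg_right
      (mul_le_mul_of_nonneg_left hx Real.pi_pos.le) (sq_nonneg t)
    linarith
  have hsup : ∀ t, (⨆ n, F n t) = (‖𝓕 g t‖₊ : ℝ≥0∞) ^ (2:ℝ) := by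
    intro t
    rw [hF]
    simp only
    rw [← ENNReal.mul_iSup]
    have hlim : Filter.Tendsto (fun n : ℕ =>
        ENNReal.ofReal (rexp (-(π * (1/((n:ℝ)+1))) * t ^ 2))) Filter.atTop (nhds 1) := by
      have h1 : Filter.Tendsto (fun n : ℕ => 1/((n:ℝ)+1)) Filter.atTop (nhds 0) :=
        tendsto_one_div_add_atTop_nhds_zero_nat
      have h2 : Filter.Tendsto (fun n : ℕ => -(π * (1/((n:ℝ)+1))) * t ^ 2)
          Filter.atTop (nhds 0) := by
        have := ((h1.const_mul π).neg).mul_const (t ^ 2)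
        simpa using this
      have h3 := (Real.continuous_exp.tendsto 0).comp h2
      have h4 := (ENNReal.continuous_ofReal.tendsto _).comp h3
      simpa [Function.comp_def] using h4
    have hsup1 : (⨆ n : ℕ, ENNReal.ofReal (rexp (-(π * (1/((n:ℝ)+1))) * t ^ 2))) = 1 := by
      apply le_antisymm
      · apply iSup_le
        intro n
        rw [show (1 : ℝ≥0∞) = ENNReal.ofReal 1 by simp]
        apply ENNReal.ofReal_le_ofReal
        rw [Real.exp_le_one_iff]
        have : 0 ≤ π * (1/((n:ℝ)+1)) * t^2 := by positivity
        linarith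
      · exact le_of_tendsto hlim (Filter.Eventually.of_forall fun n => le_iSup (fun n : ℕ => ENNReal.ofReal (rexp (-(π * (1/((n:ℝ)+1))) * t ^ 2))) n)
    rw [hsup1, mul_one]
  have : ∫⁻ t, (‖𝓕 g t‖₊ : ℝ≥0∞) ^ (2:ℝ) = ⨆ n, ∫⁻ t, F n t := by
    rw [← lintegral_iSup hmeas hmono]
    congr 1
    funext t
    rw [hsup t]
  rw [this]
  apply iSup_le
  intro n
  exact key_delta hg (by positivity)



/-- `a_j = -(-1)^{j+1}/(2π)`, so that `(-1)^{j+1} ξ^{2j+1} t = -2π (a_j ξ^{2j+1}) t`. -/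
def aC (j : ℕ) : ℝ := -((-1:ℝ)^(j+1)) / (2*π)

def φf (j : ℕ) (ξ : ℝ) : ℝ := aC j * ξ^(2*j+1)

def Dφ (j : ℕ) (ξ : ℝ) : ℝ := aC j * ((2*j+1) * ξ^(2*j))

def ψf (j : ℕ) (η : ℝ) : ℝ := Real.sign (η / aC j) * |η / aC j| ^ (((2*j+1 : ℕ) : ℝ))⁻¹

lemma aC_ne (j : ℕ) : aC j ≠ 0 := by
  unfold aC
  apply div_ne_zero
  · exact neg_ne_zero.mpr (pow_ne_zero _ (by norm_num))
  · positivity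

lemma abs_aC (j : ℕ) : |aC j| = (2*π)⁻¹ := by
  unfold aC
  rw [abs_div, abs_neg, _root_.abs_pow, abs_neg, abs_one, one_pow]
  rw [abs_of_pos (by positivity : (0:ℝ) < 2*π)]
  exact one_div _

lemma real_sign_mul_abs (r : ℝ) : Real.sign r * |r| = r := by
  rcases lt_trichotomy r 0 with h | h | h
  · rw [Real.sign_of_neg h, abs_of_neg h]; ring
  · rw [h, Real.sign_zero, abs_zero]; ring
  · rw [Real.sign_of_pos h, abs_of_pos h]; ring

lemma sign_odd_pow (j : ℕ) (ξ : ℝ) : Real.sign (ξ ^ (2*j+1)) = Real.sign ξ := by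
  rcases lt_trichotomy ξ 0 with h | h | h
  · rw [Real.sign_of_neg h, Real.sign_of_neg (Odd.pow_neg ⟨j, by ring⟩ h)]
  · rw [h, zero_pow (by omega), Real.sign_zero]
  · rw [Real.sign_of_pos h, Real.sign_of_pos (pow_pos h _)]

lemma abs_rpow_inv (j : ℕ) (ξ : ℝ) : (|ξ ^ (2*j+1)|) ^ (((2*j+1 : ℕ) : ℝ))⁻¹ = |ξ| := by
  rw [_root_.abs_pow, ← Real.rpow_natCast |ξ| (2*j+1), ← Real.rpow_mul (abs_nonneg ξ),
    mul_inv_cancel₀ (by positivity), Real.rpow_one]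

lemma ψφ (j : ℕ) (ξ : ℝ) : ψf j (φf j ξ) = ξ := by
  unfold ψf φf
  rw [mul_div_cancel_left₀ _ (aC_ne j), sign_odd_pow, abs_rpow_inv, real_sign_mul_abs]

lemma φψ (j : ℕ) (η : ℝ) : φf j (ψf j η) = η := by
  unfold φf ψf
  set r : ℝ := η / aC j with hr
  have habs : ((|r| ^ (((2*j+1 : ℕ) : ℝ))⁻¹) ^ (2*j+1 : ℕ)) = |r| := by
    rw [← Real.rpow_natCast (|r| ^ (((2*j+1 : ℕ) : ℝ))⁻¹) (2*j+1), ← Real.rpow_mul (abs_nonneg r),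
      inv_mul_cancel₀ (by positivity), Real.rpow_one]
  have hsgn : (Real.sign r) ^ (2*j+1 : ℕ) = Real.sign r := by
    rcases lt_trichotomy r 0 with h | h | h
    · rw [Real.sign_of_neg h, Odd.neg_one_pow ⟨j, by ring⟩]
    · rw [h, Real.sign_zero, zero_pow (by omega)]
    · rw [Real.sign_of_pos h, one_pow]
  rw [mul_pow, habs, hsgn, real_sign_mul_abs, hr, mul_div_cancel₀ _ (aC_ne j)]

lemma φf_inj (j : ℕ) : Function.Injective (φf j) :=
  Function.LeftInverse.injective (ψφ j)

lemma φf_image (j : ℕ) : φf j '' Set.univ = Set.univ := by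
  apply Set.eq_univ_of_forall
  intro η
  exact ⟨ψf j η, Set.mem_univ _, φψ j η⟩

lemma φf_hasDeriv (j : ℕ) (ξ : ℝ) : HasDerivAt (φf j) (Dφ j ξ) ξ := by
  have h := (hasDerivAt_pow (2*j+1) ξ).const_mul (aC j)
  have : (2*j+1 : ℕ) - 1 = 2*j := by omega
  rw [this] at h
  refine (h : HasDerivAt (φf j) _ ξ).congr_deriv ?_
  unfold Dφ
  push_cast
  ring

lemma Dφ_ne (j : ℕ) {ξ : ℝ} (hξ : ξ ≠ 0) : Dφ j ξ ≠ 0 := by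
  unfold Dφ
  apply mul_ne_zero (aC_ne j)
  apply mul_ne_zero (by positivity)
  exact pow_ne_zero _ hξ

lemma abs_Dφ (j : ℕ) (ξ : ℝ) : |Dφ j ξ| = |aC j| * ((2*j+1) * |ξ|^(2*j)) := by
  unfold Dφ
  rw [abs_mul, abs_mul, _root_.abs_pow]
  congr 2
  rw [abs_of_pos]
  positivity



def Kf (j : ℕ) (F : ℝ → ℂ) (x ξ : ℝ) : ℂ :=
  ((-1:ℝ)^j) • ((-2 * (π:ℂ) * Complex.I * (ξ:ℂ))^j *
    Complex.exp (((2*π*ξ*x : ℝ) : ℂ) * Complex.I) * F ξ)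

def Gf (j : ℕ) (F : ℝ → ℂ) (x η : ℝ) : ℂ := |Dφ j (ψf j η)|⁻¹ • Kf j F x (ψf j η)

lemma norm_Kf (j : ℕ) (F : ℝ → ℂ) (x ξ : ℝ) :
    ‖Kf j F x ξ‖ = (2*π*|ξ|)^j * ‖F ξ‖ := by
  unfold Kf
  rw [norm_smul, norm_mul, norm_mul, norm_pow, Complex.norm_exp_ofReal_mul_I]
  have h1 : ‖(-1:ℝ)‖ = 1 := by norm_num
  have h2 : ‖(-2 * (π:ℂ) * Complex.I * (ξ:ℂ))‖ = 2*π*|ξ| := by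
    simp only [norm_mul, Complex.norm_I, Complex.norm_real, Real.norm_eq_abs, norm_neg]
    rw [_root_.abs_of_pos Real.pi_pos]
    norm_num
  rw [norm_pow, h1, h2, one_pow]
  ring

lemma Kf_zero {j : ℕ} (hj : 1 ≤ j) (F : ℝ → ℂ) (x : ℝ) : Kf j F x 0 = 0 := by
  unfold Kf
  rw [Complex.ofReal_zero, mul_zero, zero_pow (by omega), zero_mul, zero_mul, smul_zero]

lemma Gf_comp (j : ℕ) (F : ℝ → ℂ) (x ξ : ℝ) :
    Gf j F x (φf j ξ) = |Dφ j ξ|⁻¹ • Kf j F x ξ := by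
  unfold Gf
  rw [ψφ]

lemma hDG {j : ℕ} (hj : 1 ≤ j) (F : ℝ → ℂ) (x ξ : ℝ) :
    |Dφ j ξ| • Gf j F x (φf j ξ) = Kf j F x ξ := by
  rw [Gf_comp, smul_smul]
  rcases eq_or_ne ξ 0 with h | h
  · subst h
    rw [Kf_zero hj, smul_zero]
  · rw [mul_inv_cancel₀ (by simpa using Dφ_ne j h), one_smul]



lemma enn_sq (z : ℂ) : (‖z‖₊ : ℝ≥0∞) ^ (2:ℝ) = ENNReal.ofReal (‖z‖^2) := by
  rw [ENNReal.ofReal_pow (norm_nonneg _), ofReal_norm_eq_enorm, enorm_eq_nnnorm, ← ENNReal.rpow_natCast]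
  norm_num

lemma Kf_cont (j : ℕ) (V : SchwartzMap ℝ ℂ) (x : ℝ) : Continuous (Kf j ⇑V x) := by
  unfold Kf
  apply Continuous.fun_const_smul
  apply Continuous.mul
  apply Continuous.mul
  · continuity
  · apply Complex.continuous_exp.comp
    continuity
  · exact V.continuous

lemma Kf_integrable (j : ℕ) (V : SchwartzMap ℝ ℂ) (x : ℝ) :
    Integrable (Kf j ⇑V x) volume := by
  apply Integrable.mono' ((V.integrable_pow_mul volume j).const_mul ((2*π)^j))
    (Kf_cont j V x).aestronglyMeasurable
  refine Eventually.of_forall fun ξ => ?_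
  rw [norm_Kf, mul_pow, Real.norm_eq_abs]
  rw [mul_assoc]

lemma Gf_integrable {j : ℕ} (hj : 1 ≤ j) (V : SchwartzMap ℝ ℂ) (x : ℝ) :
    Integrable (Gf j ⇑V x) volume := by
  rw [← integrableOn_univ, ← φf_image j,
    integrableOn_image_iff_integrableOn_abs_deriv_smul MeasurableSet.univ
      (fun ξ _ => (φf_hasDeriv j ξ).hasDerivWithinAt) ((φf_inj j).injOn)]
  have heq : (fun ξ => |Dφ j ξ| • Gf j ⇑V x (φf j ξ)) = Kf j ⇑V x :=
    funext (hDG hj ⇑V x)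
  rw [integrableOn_univ, heq]
  exact Kf_integrable j V x

lemma fourier_Gf {j : ℕ} (hj : 1 ≤ j) (V : SchwartzMap ℝ ℂ) (x t : ℝ) :
    𝓕 (Gf j ⇑V x) t =
      ∫ ξ, Complex.exp (((-2*π*(φf j ξ)*t : ℝ) : ℂ) * Complex.I) • Kf j ⇑V x ξ := by
  rw [Real.fourier_real_eq_integral_exp_smul]
  have h1 : ∫ η, Complex.exp (((-2*π*η*t : ℝ) : ℂ) * Complex.I) • Gf j ⇑V x η =
      ∫ η in φf j '' Set.univ, Complex.exp (((-2*π*η*t : ℝ) : ℂ) * Complex.I) • Gf j ⇑V x η := by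
    rw [φf_image, setIntegral_univ]
  rw [h1, integral_image_eq_integral_abs_deriv_smul MeasurableSet.univ
    (fun ξ _ => (φf_hasDeriv j ξ).hasDerivWithinAt) ((φf_inj j).injOn), setIntegral_univ]
  congr 1
  funext ξ
  rw [smul_comm, hDG hj]

lemma lintegral_Gf {j : ℕ} (hj : 1 ≤ j) (V : SchwartzMap ℝ ℂ) (x : ℝ) :
    ∫⁻ η, (‖Gf j ⇑V x η‖₊ : ℝ≥0∞) ^ (2:ℝ) =
      ENNReal.ofReal ((2*π)^(2*j) / ((2*j+1) * |aC j|)) *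
        ∫⁻ ξ, (‖V ξ‖₊ : ℝ≥0∞) ^ (2:ℝ) := by
  have hder : ∀ ξ ∈ Set.univ, HasFDerivWithinAt (φf j)
      ((1 : ℝ →L[ℝ] ℝ).smulRight (Dφ j ξ)) Set.univ ξ :=
    fun ξ _ => ((φf_hasDeriv j ξ).hasDerivWithinAt).hasFDerivWithinAt
  have hC := lintegral_image_eq_lintegral_abs_det_fderiv_mul volume MeasurableSet.univ hder
    ((φf_inj j).injOn) (fun η => (‖Gf j ⇑V x η‖₊ : ℝ≥0∞) ^ (2:ℝ))
  rw [φf_image, setLIntegral_univ, setLIntegral_univ] at hC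
  simp only [ContinuousLinearMap.det_smulRight, ContinuousLinearMap.one_apply, one_mul] at hC
  rw [hC]
  have hae : ∀ᵐ ξ : ℝ, ξ ≠ 0 := by
    rw [ae_iff]
    have hset : {a : ℝ | ¬ a ≠ 0} = {0} := by ext a; simp
    rw [hset]
    exact measure_singleton 0
  have hpt : ∀ ξ : ℝ, ξ ≠ 0 → ENNReal.ofReal |Dφ j ξ| * (‖Gf j ⇑V x (φf j ξ)‖₊ : ℝ≥0∞) ^ (2:ℝ) =
      ENNReal.ofReal ((2*π)^(2*j) / ((2*j+1) * |aC j|)) * (‖V ξ‖₊ : ℝ≥0∞) ^ (2:ℝ) := by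
    intro ξ hξ
    rw [enn_sq, enn_sq]
    rw [← ENNReal.ofReal_mul (abs_nonneg _), ← ENNReal.ofReal_mul (by positivity)]
    congr 1
    have e1 : ‖Gf j ⇑V x (φf j ξ)‖ = |Dφ j ξ|⁻¹ * ((2*π*|ξ|)^j * ‖V ξ‖) := by
      rw [Gf_comp, norm_smul, norm_Kf, Real.norm_eq_abs, abs_inv, _root_.abs_abs]
    rw [e1, abs_Dφ]
    have hb : (0:ℝ) < |ξ| := abs_pos.mpr hξ
    have hA : (0:ℝ) < |aC j| := abs_pos.mpr (aC_ne j)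
    have h2j : ((2*j+1 : ℕ) : ℝ) ≠ 0 := by positivity
    field_simp
    ring
  calc ∫⁻ ξ, ENNReal.ofReal |Dφ j ξ| * (‖Gf j ⇑V x (φf j ξ)‖₊ : ℝ≥0∞) ^ (2:ℝ)
      = ∫⁻ ξ, ENNReal.ofReal ((2*π)^(2*j) / ((2*j+1) * |aC j|)) * (‖V ξ‖₊ : ℝ≥0∞) ^ (2:ℝ) := by
        apply lintegral_congr_ae
        filter_upwards [hae] with ξ hξ
        exact hpt ξ hξ
    _ = ENNReal.ofReal ((2*π)^(2*j) / ((2*j+1) * |aC j|)) * ∫⁻ ξ, (‖V ξ‖₊ : ℝ≥0∞) ^ (2:ℝ) := by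
        rw [lintegral_const_mul _ ((V.continuous.measurable.nnnorm.coe_nnreal_ennreal).pow_const _)]





lemma deriv_formula {j : ℕ} (hj : 1 ≤ j) (u₀ : SchwartzMap ℝ ℂ) (x t : ℝ) :
    iteratedDeriv j (Uj j t ⇑u₀) x =
      ∫ ξ, Complex.exp (((-2*π*(φf j ξ)*t : ℝ) : ℂ) * Complex.I) • Kf j (𝓕 ⇑u₀) x ξ := by
  set V : SchwartzMap ℝ ℂ := SchwartzMap.fourierTransformCLM ℂ u₀ with hV
  have hVc : ⇑V = 𝓕 ⇑u₀ := SchwartzMap.fourier_coe u₀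
  set m : ℝ → ℂ := fun ξ =>
    Complex.exp (Complex.I * (((-1 : ℝ) ^ (j + 1) * ξ ^ (2 * j + 1) * t : ℝ) : ℂ)) with hm
  set h : ℝ → ℂ := fun ξ => m ξ * 𝓕 (⇑u₀) ξ with hh
  have hU : Uj j t ⇑u₀ = 𝓕⁻ h := rfl
  have hInv : 𝓕⁻ h = fun y => 𝓕 h (-y) :=
    funext fun y => Real.fourierInv_eq_fourier_neg h y
  have hnorm_m : ∀ ξ, ‖m ξ‖ = 1 := by
    intro ξ
    rw [hm]
    simp only
    set r : ℝ := (-1 : ℝ)^(j+1) * ξ^(2*j+1) * t with hr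
    rw [Complex.norm_exp]
    have : (Complex.I * (r:ℂ)).re = 0 := by simp [Complex.mul_re]
    rw [this, Real.exp_zero]
  have hm_cont : Continuous m := by
    rw [hm]
    apply Complex.continuous_exp.comp
    continuity
  have hint : ∀ (n : ℕ), (n : ℕ∞) ≤ (j : ℕ∞) → Integrable (fun ξ : ℝ => ξ^n • h ξ) volume := by
    intro n _
    apply Integrable.mono' (V.integrable_pow_mul volume n)
    · apply Continuous.aestronglyMeasurable
      apply Continuous.smul (continuous_pow n)
      rw [hh]
      exact hm_cont.mul (hVc ▸ V.continuous)
    · refine Eventually.of_forall fun ξ => ?_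
      rw [norm_smul, hh]
      simp only [norm_mul, hnorm_m ξ, one_mul, norm_pow, Real.norm_eq_abs]
      rw [hVc]
  calc iteratedDeriv j (Uj j t ⇑u₀) x
      = iteratedDeriv j (fun y => 𝓕 h (-y)) x := by rw [hU, hInv]
    _ = ((-1:ℝ)^j) • iteratedDeriv j (𝓕 h) (-x) := iteratedDeriv_comp_neg j (𝓕 h) x
    _ = ((-1:ℝ)^j) • (𝓕 (fun ξ : ℝ => (-2 * (π:ℂ) * Complex.I * (ξ:ℂ))^j • h ξ) (-x)) := by
        rw [Real.iteratedDeriv_fourier (N := (j:ℕ∞)) hint le_rfl]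
    _ = ∫ ξ, Complex.exp (((-2*π*(φf j ξ)*t : ℝ) : ℂ) * Complex.I) • Kf j (𝓕 ⇑u₀) x ξ := by
        rw [Real.fourier_real_eq_integral_exp_smul, ← integral_smul]
        congr 1
        funext ξ
        have hexp1 : Complex.exp (((-2*π*(φf j ξ)*t : ℝ) : ℂ) * Complex.I) = m ξ := by
          have hre : -2*π*(φf j ξ)*t = (-1 : ℝ)^(j+1) * ξ^(2*j+1) * t := by
            unfold φf aC
            field_simp
          rw [hre, hm]
          simp only
          rw [mul_comm]
        have hexp2 : Complex.exp (((-2*π*ξ*(-x) : ℝ) : ℂ) * Complex.I) =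
            Complex.exp (((2*π*ξ*x : ℝ) : ℂ) * Complex.I) := by
          norm_num
        rw [hexp1, hexp2]
        unfold Kf
        simp only [hh, Complex.real_smul, smul_eq_mul]
        push_cast
        ring


/-- Kato type smoothing effect:
`‖∂_x^j U_j(t) u₀‖_{L^∞_x L²_t} ≤ C ‖u₀‖_{L²}`, the time integration being over all of `ℝ`. -/
theorem kato_smoothing (j : ℕ) (hj : 1 ≤ j) :
    ∃ C : ℝ, 0 < C ∧ ∀ u₀ : SchwartzMap ℝ ℂ,
      mixedNormGlob ∞ 2 (fun x t => iteratedDeriv j (Uj j t (⇑u₀)) x) ≤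
        ENNReal.ofReal C * eLpNorm (⇑u₀) 2 volume := by
  set Creal : ℝ := (2*π)^(2*j) / ((2*j+1) * |aC j|) with hCreal
  have hCreal0 : 0 ≤ Creal := by
    rw [hCreal]
    have := abs_nonneg (aC j)
    positivity
  refine ⟨Real.sqrt Creal + 1, by positivity, fun u₀ => ?_⟩
  set V : SchwartzMap ℝ ℂ := SchwartzMap.fourierTransformCLM ℂ u₀ with hV
  have hVc : ⇑V = 𝓕 ⇑u₀ := SchwartzMap.fourier_coe u₀
  have key : ∀ x : ℝ, eLpNorm (fun t => iteratedDeriv j (Uj j t ⇑u₀) x) 2 volume ≤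
      ENNReal.ofReal (Real.sqrt Creal + 1) * eLpNorm (⇑u₀) 2 volume := by
    intro x
    have hfun : (fun t => iteratedDeriv j (Uj j t ⇑u₀) x) = 𝓕 (Gf j ⇑V x) := by
      funext t
      rw [deriv_formula hj u₀ x t, ← hVc, fourier_Gf hj V x t]
    rw [hfun]
    have hp1 : eLpNorm (Gf j ⇑V x) 2 volume =
        (ENNReal.ofReal Creal * ∫⁻ ξ, (‖V ξ‖₊ : ℝ≥0∞) ^ (2:ℝ)) ^ (1/(2:ℝ)) := by
      rw [eLpNorm_eq_lintegral_rpow_enorm_toReal (by norm_num) (by norm_num)]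
      simp only [ENNReal.toReal_ofNat, enorm_eq_nnnorm]
      rw [lintegral_Gf hj V x]
    have hp2 : eLpNorm (⇑V) 2 volume = (∫⁻ ξ, (‖V ξ‖₊ : ℝ≥0∞) ^ (2:ℝ)) ^ (1/(2:ℝ)) := by
      rw [eLpNorm_eq_lintegral_rpow_enorm_toReal (by norm_num) (by norm_num)]
      simp only [ENNReal.toReal_ofNat, enorm_eq_nnnorm]
    calc eLpNorm (𝓕 (Gf j ⇑V x)) 2 volume
        ≤ eLpNorm (Gf j ⇑V x) 2 volume := plancherel_ineq (Gf_integrable hj V x)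
      _ = (ENNReal.ofReal Creal) ^ (1/(2:ℝ)) * eLpNorm (⇑V) 2 volume := by
          rw [hp1, hp2, ENNReal.mul_rpow_of_nonneg _ _ (by norm_num)]
      _ ≤ ENNReal.ofReal (Real.sqrt Creal + 1) * eLpNorm (⇑u₀) 2 volume := by
          apply mul_le_mul'
          · rw [ENNReal.ofReal_rpow_of_nonneg hCreal0 (by norm_num)]
            apply ENNReal.ofReal_le_ofReal
            rw [← Real.sqrt_eq_rpow]
            linarith
          · rw [hVc]
            exact plancherel_ineq u₀.integrable
  have hmix : mixedNormGlob ∞ 2 (fun x t => iteratedDeriv j (Uj j t (⇑u₀)) x) =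
      essSup (fun x => eLpNorm (fun t => iteratedDeriv j (Uj j t (⇑u₀)) x) 2 volume) volume := by
    unfold mixedNormGlob
    rw [if_pos rfl]
  rw [hmix]
  exact essSup_le_of_ae_le _ (Eventually.of_forall key)


end KatoProof
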